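/- arXiv:2503.06855 — 2 statements merged into one kernel-verified Lean document; each statement's English description precedes it below -/
import Mathlib

section
/- Let μ be a compactly supported measure on Diff¹(M) such that μ^{-1} is coexpanding on average with N = 1 and constant λ > 0. Then there exist s₀ > 0 and η(s) ∈ (0,1) such that for all 0 < s ≤ s₀, all n ∈ ℕ, all x ∈ M, and all unit covectors ξ ∈ T*_x M: ∫ ‖(D_x(f^{-1})*)^{-1} ξ‖^{-s} dμⁿ(f) ≤ η(s)ⁿ. -/
open MeasureTheory

/-- The point reached after `n` steps of the random composition: applying the maps
`T (ω 0), …, T (ω (n-1))` in order. This models the induced action of `f^n_ω` on the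
unit cotangent bundle. -/
def seqPt {G X : Type*} (T : G → X → X) : ∀ n : ℕ, (Fin n → G) → X → X
  | 0, _, x => x
  | n + 1, ω, x => T (ω (Fin.last n)) (seqPt T n (fun j => ω j.castSucc) x)

/-- The multiplicative cocycle `ω ↦ ∏_{i<n} a (ω i) (x_i)` along the orbit; with
`a g x = ‖(D_x (g⁻¹)*)⁻¹ ξ‖` (for `x = (x, ξ)` in the unit cotangent bundle and `T` the induced
projective action) this equals `‖(D_x ((f^n_ω)⁻¹)*)⁻¹ ξ‖`. -/
def cocycleProd {G X : Type*} (T : G → X → X) (a : G → X → ℝ) (n : ℕ)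
    (ω : Fin n → G) (x : X) : ℝ :=
  ∏ i : Fin n, a (ω i) (seqPt T i.val (fun j => ω (Fin.castLE i.isLt.le j)) x)

lemma exp_quad {u : ℝ} (hu : |u| ≤ 1) : Real.exp u ≤ 1 + u + u ^ 2 := by
  have h := Real.exp_bound hu (n := 2) (by norm_num)
  have hsum : ∑ m ∈ Finset.range 2, u ^ m / (Nat.factorial m) = 1 + u := by
    simp [Finset.sum_range_succ]
  rw [hsum] at h
  have h2 := (abs_le.1 h).2
  norm_num [Nat.factorial] at h2
  nlinarith [sq_abs u, sq_nonneg u]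

lemma rpow_neg_le {t c s : ℝ} (hc : 0 < c) (hct : c ≤ t) (hs : 0 ≤ s) :
    t ^ (-s) ≤ c⁻¹ ^ s := by
  have ht : 0 < t := hc.trans_le hct
  rw [Real.rpow_neg ht.le, ← Real.inv_rpow ht.le]
  exact Real.rpow_le_rpow (inv_nonneg.2 ht.le) (inv_anti₀ hc hct) hs

lemma measurable_rpow_of_pos {α : Type*} [MeasurableSpace α] {f : α → ℝ}
    (hf : Measurable f) (hpos : ∀ y, 0 < f y) (c : ℝ) :
    Measurable fun y => f y ^ c := by
  have h : (fun y => f y ^ c) = fun y => Real.exp (Real.log (f y) * c) :=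
    funext fun y => Real.rpow_def_of_pos (hpos y) c
  rw [h]
  exact Real.measurable_exp.comp ((Real.measurable_log.comp hf).mul measurable_const)

lemma integrable_of_bdd {α : Type*} [MeasurableSpace α] {ν : Measure α} [IsFiniteMeasure ν]
    {f : α → ℝ} (hf : Measurable f) (B : ℝ) (hB : ∀ y, |f y| ≤ B) : Integrable f ν :=
  (integrable_const B).mono' hf.aestronglyMeasurable (Filter.Eventually.of_forall hB)

section
variable {G X : Type*} [MeasurableSpace G] [MeasurableSpace X]

lemma measurable_seqPt (T : G → X → X) (hmT : Measurable (Function.uncurry T)) :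
    ∀ (n : ℕ) (x : X), Measurable fun ω : Fin n → G => seqPt T n ω x
  | 0, x => measurable_const
  | n + 1, x => by
    show Measurable fun ω : Fin (n+1) → G =>
      T (ω (Fin.last n)) (seqPt T n (fun j => ω j.castSucc) x)
    have h1 : Measurable fun ω : Fin (n+1) → G => (fun j : Fin n => ω j.castSucc) :=
      measurable_pi_lambda _ fun j => measurable_pi_apply _
    exact hmT.comp ((measurable_pi_apply (Fin.last n)).prodMk
      ((measurable_seqPt T hmT n x).comp h1))

lemma measurable_cocycleProd (T : G → X → X) (a : G → X → ℝ)
    (hmT : Measurable (Function.uncurry T)) (hma : Measurable (Function.uncurry a))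
    (n : ℕ) (x : X) : Measurable fun ω : Fin n → G => cocycleProd T a n ω x := by
  unfold cocycleProd
  apply Finset.measurable_prod
  intro i _
  have h1 : Measurable fun ω : Fin n → G => (fun j : Fin i.val => ω (Fin.castLE i.isLt.le j)) :=
    measurable_pi_lambda _ fun j => measurable_pi_apply _
  exact hma.comp ((measurable_pi_apply i).prodMk
    ((measurable_seqPt T hmT i.val x).comp h1))

omit [MeasurableSpace G] [MeasurableSpace X] in
lemma cocycleProd_succ (T : G → X → X) (a : G → X → ℝ) (n : ℕ)
    (ω : Fin (n+1) → G) (x : X) :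
    cocycleProd T a (n+1) ω x = cocycleProd T a n (fun j => ω j.castSucc) x *
      a (ω (Fin.last n)) (seqPt T n (fun j => ω j.castSucc) x) := by
  unfold cocycleProd
  rw [Fin.prod_univ_castSucc]
  congr 1

omit [MeasurableSpace G] [MeasurableSpace X] in
lemma cocycleProd_lb {T : G → X → X} {a : G → X → ℝ} {C : ℝ} (hC : 1 ≤ C)
    (hbound : ∀ g x, C⁻¹ ≤ a g x ∧ a g x ≤ C) (n : ℕ) (ω : Fin n → G) (x : X) :
    C⁻¹ ^ n ≤ cocycleProd T a n ω x := by
  have hCpos : (0:ℝ) < C := lt_of_lt_of_le one_pos hC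
  have := Finset.prod_le_prod (s := Finset.univ)
    (f := fun _ : Fin n => C⁻¹)
    (g := fun i : Fin n => a (ω i) (seqPt T i.val (fun j => ω (Fin.castLE i.isLt.le j)) x))
    (fun _ _ => (inv_pos.2 hCpos).le) (fun i _ => (hbound _ _).1)
  simpa [cocycleProd] using this
end

/-- Suppose `μ` is a compactly supported (here: uniformly bounded) probability
measure on diffeomorphisms such that `μ⁻¹` is coexpanding on average with `N = 1` and constant
`λ > 0`, i.e. `∫ log ‖(D_x(f⁻¹)*)⁻¹ ξ‖ dμ ≥ λ` for all unit covectors `ξ`. Then there are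
`s₀ > 0` and, for each `0 < s ≤ s₀`, some `η(s) ∈ (0,1)` such that for every `n`, every `x` and
every unit covector `ξ` one has `∫ ‖(D_x((f^n_ω)⁻¹)*)⁻¹ ξ‖^{-s} dμⁿ(ω) ≤ η(s)ⁿ`.
Here `X` abstracts the unit cotangent bundle, `T` the induced action on it, and `a g x` the
norm `‖(D_x(g⁻¹)*)⁻¹ ξ‖`. -/
theorem stmt3 {G X : Type*} [MeasurableSpace G] [MeasurableSpace X]
    (μ : Measure G) [IsProbabilityMeasure μ]
    (T : G → X → X) (a : G → X → ℝ)
    (hmT : Measurable (Function.uncurry T))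
    (hma : Measurable (Function.uncurry a))
    (C : ℝ) (hC : 1 ≤ C) (hbound : ∀ g x, C⁻¹ ≤ a g x ∧ a g x ≤ C)
    (lam : ℝ) (hlam : 0 < lam)
    (hexp : ∀ x : X, lam ≤ ∫ g, Real.log (a g x) ∂μ) :
    ∃ s₀ > (0 : ℝ), ∀ s : ℝ, 0 < s → s ≤ s₀ →
      ∃ η : ℝ, 0 < η ∧ η < 1 ∧ ∀ (n : ℕ) (x : X),
        (∫ ω, (cocycleProd T a n ω x) ^ (-s) ∂(Measure.pi fun _ : Fin n => μ)) ≤ η ^ n := by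
  have hCpos : (0:ℝ) < C := lt_of_lt_of_le one_pos hC
  set L := Real.log C with hLdef
  have hL : 0 ≤ L := Real.log_nonneg hC
  have hL1 : (0:ℝ) < L + 1 := by linarith
  refine ⟨min (min (L+1)⁻¹ (1/lam)) (lam / (2*(L^2+1))), by positivity, ?_⟩
  intro s hs hs0
  have hA : s ≤ (L+1)⁻¹ := hs0.trans ((min_le_left _ _).trans (min_le_left _ _))
  have hB : s ≤ 1/lam := hs0.trans ((min_le_left _ _).trans (min_le_right _ _))
  have hD : s ≤ lam / (2*(L^2+1)) := hs0.trans (min_le_right _ _)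
  have hsL : s * L ≤ 1 := by
    have h := mul_le_mul_of_nonneg_right hA hL1.le
    rw [inv_mul_cancel₀ hL1.ne'] at h
    nlinarith
  have hslam : s * lam ≤ 1 := by
    have := (le_div_iff₀ hlam).1 hB
    linarith
  have hsq : s * L^2 ≤ lam / 2 := by
    have hd : (0:ℝ) < 2*(L^2+1) := by positivity
    have := (le_div_iff₀ hd).1 hD
    nlinarith
  set η : ℝ := 1 - s * lam / 2 with hηdef
  have hη0 : 0 < η := by simp only [hηdef]; linarith
  have hη1 : η < 1 := by
    have := mul_pos hs hlam
    simp only [hηdef]; linarith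
  -- single-step bound
  have hstep : ∀ y : X, (∫ g, (a g y) ^ (-s) ∂μ) ≤ η := by
    intro y
    have hmay : Measurable fun g => a g y :=
      hma.comp (measurable_id.prodMk measurable_const)
    have hpos : ∀ g, 0 < a g y := fun g =>
      lt_of_lt_of_le (inv_pos.2 hCpos) (hbound g y).1
    have hlogabs : ∀ g, |Real.log (a g y)| ≤ L := by
      intro g
      rw [abs_le]
      constructor
      · rw [← Real.log_inv]
        exact Real.log_le_log (inv_pos.2 hCpos) (hbound g y).1
      · exact Real.log_le_log (hpos g) (hbound g y).2
    have hpt : ∀ g, (a g y) ^ (-s) ≤ 1 - s * Real.log (a g y) + s^2 * L^2 := by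
      intro g
      set t := Real.log (a g y) with htdef
      have hu : |t * (-s)| ≤ 1 := by
        rw [abs_mul, abs_neg, abs_of_pos hs]
        calc |t| * s ≤ L * s := mul_le_mul_of_nonneg_right (hlogabs g) hs.le
          _ ≤ 1 := by nlinarith
      have heq : (a g y) ^ (-s) = Real.exp (t * (-s)) :=
        Real.rpow_def_of_pos (hpos g) _
      rw [heq]
      have h1 := exp_quad hu
      have h2 : t^2 ≤ L^2 := sq_le_sq' (neg_le_of_abs_le (hlogabs g))
        (le_of_abs_le (hlogabs g))
      nlinarith [sq_nonneg s]
    have hintlog : Integrable (fun g => Real.log (a g y)) μ :=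
      integrable_of_bdd (Real.measurable_log.comp hmay) L hlogabs
    have hint1 : Integrable (fun g => (a g y) ^ (-s)) μ := by
      refine integrable_of_bdd (measurable_rpow_of_pos hmay hpos _) (C ^ s) (fun g => ?_)
      rw [abs_of_nonneg (Real.rpow_nonneg (hpos g).le _)]
      have := rpow_neg_le (inv_pos.2 hCpos) (hbound g y).1 hs.le
      rwa [inv_inv] at this
    have hint2 : Integrable (fun g => 1 - s * Real.log (a g y) + s^2 * L^2) μ := by
      refine integrable_of_bdd
        ((measurable_const.sub ((Real.measurable_log.comp hmay).const_mul s)).add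
          measurable_const) (1 + s * L + s^2 * L^2) (fun g => ?_)
      have h := abs_le.1 (hlogabs g)
      have h1 := mul_le_mul_of_nonneg_left h.2 hs.le
      have h2 := mul_le_mul_of_nonneg_left h.1 hs.le
      rw [abs_le]
      constructor <;> nlinarith [sq_nonneg s, sq_nonneg L, mul_pos hs hs]
    have hfun : (fun g => 1 - s * Real.log (a g y) + s^2 * L^2)
        = fun g => Real.log (a g y) * (-s) + (1 + s^2 * L^2) := by
      funext g; ring
    calc (∫ g, (a g y) ^ (-s) ∂μ)
        ≤ ∫ g, (1 - s * Real.log (a g y) + s^2 * L^2) ∂μ :=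
          integral_mono hint1 hint2 hpt
      _ = (∫ g, Real.log (a g y) ∂μ) * (-s) + (1 + s^2 * L^2) := by
          rw [hfun, integral_add (hintlog.mul_const _) (integrable_const _),
            integral_mul_const, integral_const]
          simp [measure_univ]
      _ ≤ η := by
          have h3 := mul_le_mul_of_nonneg_left (hexp y) hs.le
          simp only [hηdef]
          nlinarith
  refine ⟨η, hη0, hη1, ?_⟩
  intro n
  induction n with
  | zero =>
      intro x
      simp [cocycleProd, Real.one_rpow]
  | succ n ih =>
      intro x
      set ν := (Measure.pi fun _ : Fin n => μ) with hνdef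
      set e := MeasurableEquiv.piFinSuccAbove (fun _ : Fin (n+1) => G) (Fin.last n) with he
      have hmp : MeasurePreserving e (Measure.pi fun _ : Fin (n+1) => μ) (μ.prod ν) :=
        measurePreserving_piFinSuccAbove (fun _ : Fin (n+1) => μ) (Fin.last n)
      set φ : (Fin n → G) → ℝ := fun ω' => (cocycleProd T a n ω' x) ^ (-s) with hφdef
      set ψ : G × (Fin n → G) → ℝ :=
        fun p => φ p.2 * (a p.1 (seqPt T n p.2 x)) ^ (-s) with hψdef
      have hcppos : ∀ (ω' : Fin n → G), 0 < cocycleProd T a n ω' x := fun ω' =>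
        lt_of_lt_of_le (by positivity) (cocycleProd_lb hC hbound n ω' x)
      have hapos : ∀ g y, 0 < a g y := fun g y =>
        lt_of_lt_of_le (inv_pos.2 hCpos) (hbound g y).1
      have hmφ : Measurable φ :=
        measurable_rpow_of_pos (measurable_cocycleProd T a hmT hma n x) hcppos _
      have hmψ : Measurable ψ := by
        apply Measurable.mul
        · exact hmφ.comp measurable_snd
        · exact measurable_rpow_of_pos (hma.comp (measurable_fst.prodMk
            ((measurable_seqPt T hmT n x).comp measurable_snd))) (fun p => hapos _ _) _
      have hφle : ∀ ω', φ ω' ≤ (C ^ n) ^ s := by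
        intro ω'
        have := rpow_neg_le (t := cocycleProd T a n ω' x) (c := C⁻¹ ^ n)
          (by positivity) (cocycleProd_lb hC hbound n ω' x) hs.le
        rwa [← inv_pow, inv_inv] at this
      have hφnn : ∀ ω', 0 ≤ φ ω' := fun ω' => Real.rpow_nonneg (hcppos ω').le _
      have hintφ : Integrable φ ν :=
        integrable_of_bdd hmφ ((C ^ n) ^ s)
          (fun ω' => by rw [abs_of_nonneg (hφnn ω')]; exact hφle ω')
      have harpow : ∀ g (y : X), (a g y) ^ (-s) ≤ C ^ s := by
        intro g y
        have := rpow_neg_le (inv_pos.2 hCpos) (hbound g y).1 hs.le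
        rwa [inv_inv] at this
      have hintψ : Integrable ψ (μ.prod ν) := by
        refine integrable_of_bdd hmψ ((C ^ n) ^ s * C ^ s) (fun p => ?_)
        rw [abs_of_nonneg (mul_nonneg (hφnn p.2) (Real.rpow_nonneg (hapos _ _).le _))]
        exact mul_le_mul (hφle p.2) (harpow _ _)
          (Real.rpow_nonneg (hapos _ _).le _) (by positivity)
      have hkey : ∀ p : G × (Fin n → G),
          (cocycleProd T a (n+1) (e.symm p) x) ^ (-s) = ψ p := by
        rintro ⟨g, ω'⟩
        have hsymm : ∀ j, e.symm (g, ω') j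
            = Fin.insertNth (α := fun _ => G) (Fin.last n) g ω' j := fun j => rfl
        have hres : (fun j : Fin n => (e.symm (g, ω')) j.castSucc) = ω' := by
          funext j
          rw [hsymm, ← Fin.succAbove_last_apply, Fin.insertNth_apply_succAbove]
        have hlast : (e.symm (g, ω')) (Fin.last n) = g := by
          rw [hsymm]; exact Fin.insertNth_apply_same _ _ _
        rw [cocycleProd_succ, hres, hlast,
          Real.mul_rpow (hcppos ω').le (hapos _ _).le]
      calc (∫ ω, (cocycleProd T a (n+1) ω x) ^ (-s) ∂(Measure.pi fun _ : Fin (n+1) => μ))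
          = ∫ p, (cocycleProd T a (n+1) (e.symm p) x) ^ (-s) ∂(μ.prod ν) := by
            rw [← hmp.integral_comp e.measurableEmbedding
              (fun p => (cocycleProd T a (n+1) (e.symm p) x) ^ (-s))]
            refine integral_congr_ae (Filter.Eventually.of_forall fun ω => ?_)
            simp [e.symm_apply_apply]
        _ = ∫ p, ψ p ∂(μ.prod ν) := by simp_rw [hkey]
        _ = ∫ ω', ∫ g, ψ (g, ω') ∂μ ∂ν := integral_prod_symm _ hintψ
        _ ≤ ∫ ω', φ ω' * η ∂ν := by
            refine integral_mono hintψ.integral_prod_right (hintφ.mul_const _) ?_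
            intro ω'
            dsimp only
            have hconst : (∫ g, ψ (g, ω') ∂μ)
                = φ ω' * ∫ g, (a g (seqPt T n ω' x)) ^ (-s) ∂μ := by
              simp only [hψdef]
              exact integral_const_mul _ _
            rw [hconst]
            exact mul_le_mul_of_nonneg_left (hstep _) (hφnn ω')
        _ = (∫ ω', φ ω' ∂ν) * η := integral_mul_const _ _
        _ ≤ η ^ n * η := mul_le_mul_of_nonneg_right (ih x) hη0.le
        _ = η ^ (n+1) := (pow_succ η n).symm
end

section
/- Under the hypotheses that generator 𝒢 of a random volume-preserving dynamical system has a spectral gap on H^{-s} with 1 a simple eigenvalue and no other peripheral spectrum, the system is multiply exponentially mixing: there exists θ ∈ (0,1) such that for each d ∈ ℕ there is C > 0 so that for all zero-mean φ₀,…,φ_{d−1} ∈ C¹(M), zero-mean φ_d ∈ H^{−s}, and times 0 = n₀ < n₁ < ⋯ < n_d with gaps m_j = n_j − n_{j−1} and L = min_j m_j, one has |𝔼_μ[∫ φ₀ · 𝒢^{m₁}(φ₁ · 𝒢^{m₂}(φ₂ ⋯ φ_{d−1} · 𝒢^{m_d}φ_d)) dx]| ≤ C θ^L (∏_{j<d}‖φ_j‖_{C¹})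 ‖φ_d‖_{H^{−s}}. -/
open MeasureTheory

/-- The nested correlation expression
`mul φ₀ (𝒢^{m₁} (mul φ₁ (𝒢^{m₂} (⋯ mul φ_{d−1} (𝒢^{m_d} ψ)⋯))))`, where the list `l` holds the
pairs `(φ_{j-1}, m_j)`. -/
noncomputable def chain {B C : Type*} [NormedAddCommGroup B] [NormedSpace ℝ B]
    [NormedAddCommGroup C] [NormedSpace ℝ C]
    (𝒢 : B →L[ℝ] B) (mul : C →L[ℝ] B →L[ℝ] B) : List (C × ℕ) → B → B
  | [], ψ => ψ
  | p :: t, ψ => mul p.1 ((𝒢 ^ p.2) (chain 𝒢 mul t ψ))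

/-!
Only the first gap needs to carry the decay. Write `χ` for the inner expression
`φ₁ 𝒢^{m₂}(⋯)`. Splitting `χ = m(χ) 1 + (χ - m(χ) 1)`, the constant part contributes
`m(χ) m(φ₀ · 1) = 0`, and the zero-mean part decays like `θ^{m₁} ≤ θ^L` under `𝒢^{m₁}`.
The spectral gap also makes the powers of `𝒢` uniformly bounded, so `‖χ‖` is at most a
constant depending on `d` times `∏_{0<j<d} ‖φ_j‖ ‖φ_d‖`.
-/

section SpectralGap

variable {B C : Type*} [NormedAddCommGroup B] [NormedSpace ℝ B]
  [NormedAddCommGroup C] [NormedSpace ℝ C]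
  {𝒢 : B →L[ℝ] B} {m : B →L[ℝ] ℝ} {one : B} {C₀ θ₀ : ℝ}

noncomputable def meanZeroPart (m : B →L[ℝ] ℝ) (one : B) : B →L[ℝ] B :=
  ContinuousLinearMap.id ℝ B - m.smulRight one

@[simp]
theorem meanZeroPart_apply (χ : B) : meanZeroPart m one χ = χ - m χ • one := by
  simp [meanZeroPart]

theorem mean_meanZeroPart (hmone : m one = 1) (χ : B) : m (meanZeroPart m one χ) = 0 := by
  simp [hmone]

theorem pow_apply_meanZeroPart (hone : 𝒢 one = one) (n : ℕ) (χ : B) :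
    (𝒢 ^ n) (meanZeroPart m one χ) = (𝒢 ^ n) χ - m χ • one := by
  have hfix : (𝒢 ^ n) one = one := by
    rw [FunLike.coe_pow_eq_iterate]
    exact Function.iterate_fixed hone n
  rw [meanZeroPart_apply, map_sub, map_smul, hfix]

theorem norm_pow_apply_sub_mean_le (hone : 𝒢 one = one) (hmone : m one = 1)
    (hgap : ∀ ψ : B, m ψ = 0 → ∀ n : ℕ, ‖(𝒢 ^ n) ψ‖ ≤ C₀ * θ₀ ^ n * ‖ψ‖)
    (hC₀ : 0 ≤ C₀) (hθ₀ : 0 ≤ θ₀) (n : ℕ) (χ : B) :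
    ‖(𝒢 ^ n) χ - m χ • one‖ ≤ C₀ * θ₀ ^ n * ‖meanZeroPart m one‖ * ‖χ‖ := by
  rw [← pow_apply_meanZeroPart hone, mul_assoc _ ‖meanZeroPart m one‖]
  exact (hgap _ (mean_meanZeroPart hmone χ) n).trans
    (mul_le_mul_of_nonneg_left ((meanZeroPart m one).le_opNorm χ) (by positivity))

theorem norm_pow_apply_le (hone : 𝒢 one = one) (hmone : m one = 1)
    (hgap : ∀ ψ : B, m ψ = 0 → ∀ n : ℕ, ‖(𝒢 ^ n) ψ‖ ≤ C₀ * θ₀ ^ n * ‖ψ‖)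
    (hC₀ : 0 ≤ C₀) (hθ₀ : 0 ≤ θ₀) (hθ₁ : θ₀ ≤ 1) (n : ℕ) (χ : B) :
    ‖(𝒢 ^ n) χ‖ ≤ (‖m‖ * ‖one‖ + C₀ * ‖meanZeroPart m one‖) * ‖χ‖ := by
  have hmean : ‖m χ • one‖ ≤ ‖m‖ * ‖one‖ * ‖χ‖ := by
    rw [norm_smul, mul_right_comm]
    exact mul_le_mul_of_nonneg_right (m.le_opNorm χ) (norm_nonneg one)
  have hdecay : C₀ * θ₀ ^ n * ‖meanZeroPart m one‖ * ‖χ‖ ≤ C₀ * ‖meanZeroPart m one‖ * ‖χ‖ := by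
    have : θ₀ ^ n ≤ 1 := pow_le_one₀ hθ₀ hθ₁
    gcongr
    simpa using mul_le_mul_of_nonneg_left this hC₀
  calc ‖(𝒢 ^ n) χ‖ = ‖m χ • one + ((𝒢 ^ n) χ - m χ • one)‖ := by rw [add_sub_cancel]
    _ ≤ ‖m χ • one‖ + ‖(𝒢 ^ n) χ - m χ • one‖ := norm_add_le _ _
    _ ≤ ‖m‖ * ‖one‖ * ‖χ‖ + C₀ * ‖meanZeroPart m one‖ * ‖χ‖ :=
      add_le_add hmean ((norm_pow_apply_sub_mean_le hone hmone hgap hC₀ hθ₀ n χ).trans hdecay)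
    _ = (‖m‖ * ‖one‖ + C₀ * ‖meanZeroPart m one‖) * ‖χ‖ := by ring

theorem abs_mean_mul_pow_apply_le (hone : 𝒢 one = one) (hmone : m one = 1)
    (hgap : ∀ ψ : B, m ψ = 0 → ∀ n : ℕ, ‖(𝒢 ^ n) ψ‖ ≤ C₀ * θ₀ ^ n * ‖ψ‖)
    (hC₀ : 0 ≤ C₀) (hθ₀ : 0 ≤ θ₀) (mul : C →L[ℝ] B →L[ℝ] B) {φ : C}
    (hφ : m (mul φ one) = 0) (n : ℕ) (χ : B) :
    |m (mul φ ((𝒢 ^ n) χ))| ≤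
      ‖m‖ * ‖mul‖ * C₀ * ‖meanZeroPart m one‖ * θ₀ ^ n * ‖φ‖ * ‖χ‖ := by
  have hconst : m (mul φ ((𝒢 ^ n) χ)) = m (mul φ ((𝒢 ^ n) χ - m χ • one)) := by
    rw [map_sub, map_smul, map_sub, map_smul, hφ, smul_zero, sub_zero]
  rw [hconst, ← Real.norm_eq_abs]
  calc ‖m (mul φ ((𝒢 ^ n) χ - m χ • one))‖
      ≤ ‖m‖ * (‖mul‖ * ‖φ‖ * ‖(𝒢 ^ n) χ - m χ • one‖) :=
        (m.le_opNorm _).trans (mul_le_mul_of_nonneg_left (mul.le_opNorm₂ _ _) (norm_nonneg m))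
    _ ≤ ‖m‖ * (‖mul‖ * ‖φ‖ * (C₀ * θ₀ ^ n * ‖meanZeroPart m one‖ * ‖χ‖)) := by
        gcongr
        exact norm_pow_apply_sub_mean_le hone hmone hgap hC₀ hθ₀ n χ
    _ = _ := by ring

theorem norm_chain_le (mul : C →L[ℝ] B →L[ℝ] B)
    {A : ℝ} (hA : 0 ≤ A) (h𝒢 : ∀ (n : ℕ) (χ : B), ‖(𝒢 ^ n) χ‖ ≤ A * ‖χ‖)
    (l : List (C × ℕ)) (ψ : B) :
    ‖chain 𝒢 mul l ψ‖ ≤ (‖mul‖ * A) ^ l.length * (l.map fun p => ‖p.1‖).prod * ‖ψ‖ := by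
  induction l with
  | nil => simp [chain]
  | cons p t ih =>
    calc ‖chain 𝒢 mul (p :: t) ψ‖
        ≤ ‖mul‖ * ‖p.1‖ * ‖(𝒢 ^ p.2) (chain 𝒢 mul t ψ)‖ := mul.le_opNorm₂ _ _
      _ ≤ ‖mul‖ * ‖p.1‖ * (A * ((‖mul‖ * A) ^ t.length * (t.map fun p => ‖p.1‖).prod * ‖ψ‖)) := by
        gcongr
        exact (h𝒢 _ _).trans (by gcongr)
      _ = _ := by simp only [List.length_cons, List.map_cons, List.prod_cons]; ring

end SpectralGap

theorem stmt17_general {B C : Type*} [NormedAddCommGroup B] [NormedSpace ℝ B]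
    [NormedAddCommGroup C] [NormedSpace ℝ C]
    (𝒢 : B →L[ℝ] B) (mul : C →L[ℝ] B →L[ℝ] B)
    (m : B →L[ℝ] ℝ) (one : B)
    (hone : 𝒢 one = one) (hmone : m one = 1)
    (hgap : ∃ (C₀ θ₀ : ℝ), 0 < C₀ ∧ 0 < θ₀ ∧ θ₀ < 1 ∧
      ∀ ψ : B, m ψ = 0 → ∀ n : ℕ, ‖(𝒢 ^ n) ψ‖ ≤ C₀ * θ₀ ^ n * ‖ψ‖) :
    ∃ θ : ℝ, 0 < θ ∧ θ < 1 ∧ ∀ d : ℕ, ∃ Cd : ℝ, 0 < Cd ∧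
      ∀ l : List (C × ℕ), l.length = d →
        (∀ p ∈ l, 1 ≤ p.2 ∧ m (mul p.1 one) = 0) →
        ∀ ψ : B, m ψ = 0 →
        ∀ L : ℕ, (∀ p ∈ l, L ≤ p.2) →
          |m (chain 𝒢 mul l ψ)| ≤
            Cd * θ ^ L * (l.map fun p => ‖p.1‖).prod * ‖ψ‖ := by
  obtain ⟨C₀, θ₀, hC₀, hθ₀, hθ₁, hdecay⟩ := hgap
  set D := ‖m‖ * ‖mul‖ * C₀ * ‖meanZeroPart m one‖
  set K := ‖mul‖ * (‖m‖ * ‖one‖ + C₀ * ‖meanZeroPart m one‖)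
  refine ⟨θ₀, hθ₀, hθ₁, fun d => ⟨D * K ^ (d - 1) + 1, by positivity, ?_⟩⟩
  rintro (_ | ⟨p, t⟩) rfl hl ψ hψ L hL
  · simp only [chain, hψ, abs_zero, List.map_nil, List.prod_nil]
    positivity
  have hθL : θ₀ ^ p.2 ≤ θ₀ ^ L := pow_le_pow_of_le_one hθ₀.le hθ₁.le (hL p List.mem_cons_self)
  have htail := norm_chain_le mul (by positivity)
    (norm_pow_apply_le hone hmone hdecay hC₀.le hθ₀.le hθ₁.le) t ψ
  have hprod : 0 ≤ (t.map fun p => ‖p.1‖).prod :=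
    List.prod_nonneg (by simp only [List.mem_map]; rintro _ ⟨q, -, rfl⟩; exact norm_nonneg _)
  calc |m (chain 𝒢 mul (p :: t) ψ)|
      ≤ D * θ₀ ^ p.2 * ‖p.1‖ * ‖chain 𝒢 mul t ψ‖ :=
        abs_mean_mul_pow_apply_le hone hmone hdecay hC₀.le hθ₀.le mul
          (hl p List.mem_cons_self).2 p.2 _
    _ ≤ D * θ₀ ^ L * ‖p.1‖ * (K ^ t.length * (t.map fun p => ‖p.1‖).prod * ‖ψ‖) := by
        gcongr
    _ ≤ (D * K ^ t.length + 1) * θ₀ ^ L * (‖p.1‖ * (t.map fun p => ‖p.1‖).prod) * ‖ψ‖ := by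
        nlinarith [show 0 ≤ θ₀ ^ L * (‖p.1‖ * (t.map fun p => ‖p.1‖).prod) * ‖ψ‖ by positivity]
    _ = _ := by simp

/-- Suppose the generator `𝒢` of a random volume-preserving system has a
spectral gap on `H^{−s}` (modelled by the Banach space `B`): `1` is a simple eigenvalue with
eigenvector the constant function `one`, the mean functional `m` is preserved, and `𝒢` decays
exponentially on the kernel of `m`. Multiplication by `C¹` functions (the space `C`) is a
bounded bilinear operation `mul` on `B`. Then the system is multiply exponentially mixing:
there is `θ ∈ (0,1)` such that for each `d` there is `C_d > 0` with
`|𝔼_μ[∫ φ₀ 𝒢^{m₁}(φ₁ 𝒢^{m₂}(⋯ φ_{d−1} 𝒢^{m_d} φ_d)) dx]|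
  ≤ C_d θ^L (∏_{j<d} ‖φ_j‖_{C¹}) ‖φ_d‖_{H^{−s}}`
for zero-mean `φ₀, …, φ_{d−1} ∈ C¹`, zero-mean `φ_d ∈ H^{−s}`, gaps `m_j ≥ 1` and
`L = min_j m_j`. -/
theorem stmt17 {B C : Type*} [NormedAddCommGroup B] [NormedSpace ℝ B]
    [NormedAddCommGroup C] [NormedSpace ℝ C]
    (𝒢 : B →L[ℝ] B) (mul : C →L[ℝ] B →L[ℝ] B)
    (m : B →L[ℝ] ℝ) (one : B)
    (hone : 𝒢 one = one) (hmone : m one = 1)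
    (hGm : ∀ ψ : B, m (𝒢 ψ) = m ψ)
    (hgap : ∃ (C₀ θ₀ : ℝ), 0 < C₀ ∧ 0 < θ₀ ∧ θ₀ < 1 ∧
      ∀ ψ : B, m ψ = 0 → ∀ n : ℕ, ‖(𝒢 ^ n) ψ‖ ≤ C₀ * θ₀ ^ n * ‖ψ‖) :
    ∃ θ : ℝ, 0 < θ ∧ θ < 1 ∧ ∀ d : ℕ, ∃ Cd : ℝ, 0 < Cd ∧
      ∀ l : List (C × ℕ), l.length = d →
        (∀ p ∈ l, 1 ≤ p.2 ∧ m (mul p.1 one) = 0) →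
        ∀ ψ : B, m ψ = 0 →
        ∀ L : ℕ, (∀ p ∈ l, L ≤ p.2) →
          |m (chain 𝒢 mul l ψ)| ≤
            Cd * θ ^ L * (l.map fun p => ‖p.1‖).prod * ‖ψ‖ :=
  stmt17_general 𝒢 mul m one hone hmone hgap
end
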